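/- arXiv:2506.01128 — 3 statements merged into one kernel-verified Lean document; each statement's English description precedes it below -/
import Mathlib

section
/- With n(t) = n₀/(1+n₀t) and v(t) = n/3 + (v₀ − n₀/3)(n/n₀)⁴ where n₀ > 0, the ratio v(t)/n(t) converges to 1/3 as t → ∞, independently of n₀ and v₀. -/
open Filter

theorem stmt14 (n₀ v₀ : ℝ) (hn₀ : 0 < n₀)
    (n v : ℝ → ℝ) (hn : ∀ t, n t = n₀ / (1 + n₀ * t))
    (hv : ∀ t, v t = n t / 3 + (v₀ - n₀ / 3) * (n t / n₀) ^ 4) :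
    Tendsto (fun t => v t / n t) atTop (nhds (1 / 3)) := by
  have hnlim : Tendsto n atTop (nhds 0) := by
    have h1 : Tendsto (fun t : ℝ => 1 + n₀ * t) atTop atTop :=
      tendsto_atTop_add_const_left _ 1 (tendsto_id.const_mul_atTop hn₀)
    have := (tendsto_const_nhds (x := n₀)).div_atTop h1
    refine this.congr fun t => (hn t).symm
  have key : ∀ᶠ t in atTop, v t / n t
      = 1 / 3 + (v₀ - n₀ / 3) / n₀ ^ 4 * (n t) ^ 3 := by
    filter_upwards [eventually_gt_atTop 0] with t ht
    have hden : 0 < 1 + n₀ * t := by positivity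
    have hnt : n t ≠ 0 := by
      rw [hn t]; positivity
    rw [hv t]
    field_simp
  have : Tendsto (fun t => 1 / 3 + (v₀ - n₀ / 3) / n₀ ^ 4 * (n t) ^ 3)
      atTop (nhds (1 / 3)) := by
    have h3 : Tendsto (fun t => (n t) ^ 3) atTop (nhds 0) := by
      simpa using hnlim.pow 3
    have := (h3.const_mul ((v₀ - n₀ / 3) / n₀ ^ 4)).const_add (1 / 3)
    simpa using this
  exact this.congr' (key.mono fun t h => h.symm)
end

section
/- Let n(t) = n₀/(1+n₀t) solve ṅ = −n², let v solve v̇ + 4nv = n² with v(0)=v₀, and let w solve ẇ + 6nw = −n² + 6v(n − v) with w(0)=w₀. Then w(t) = n/15 + a n⁴ + b n⁶ + c n⁷ for some constants a, b, c determined by the initial data; in particular w(t)/n(t) → 1/15 as t → ∞. -/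
set_option maxHeartbeats 1000000


open Filter

theorem stmt15 (n₀ v₀ w₀ : ℝ) (hn₀ : 0 < n₀)
    (n v w : ℝ → ℝ) (hn : ∀ t, n t = n₀ / (1 + n₀ * t))
    (hv0 : v 0 = v₀) (hw0 : w 0 = w₀)
    (hv : ∀ t ∈ Set.Ici (0 : ℝ),
      HasDerivWithinAt v (n t ^ 2 - 4 * n t * v t) (Set.Ici 0) t)
    (hw : ∀ t ∈ Set.Ici (0 : ℝ),
      HasDerivWithinAt w (-(n t) ^ 2 + 6 * v t * (n t - v t) - 6 * n t * w t)
        (Set.Ici 0) t) :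
    (∃ a b c : ℝ, ∀ t ∈ Set.Ici (0 : ℝ),
      w t = n t / 15 + a * n t ^ 4 + b * n t ^ 6 + c * n t ^ 7) ∧
    Tendsto (fun t => w t / n t) atTop (nhds (1 / 15)) := by
  have hn₀' : n₀ ≠ 0 := ne_of_gt hn₀
  have hupos : ∀ t ∈ Set.Ici (0 : ℝ), 0 < 1 + n₀ * t := by
    intro t ht
    have ht' : (0:ℝ) ≤ t := ht
    nlinarith
  have hconst : ∀ f : ℝ → ℝ,
      (∀ t ∈ Set.Ici (0:ℝ), HasDerivWithinAt f 0 (Set.Ici (0:ℝ)) t) →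
      ∀ t ∈ Set.Ici (0:ℝ), f t = f 0 := by
    intro f hf t ht
    have ht' : (0:ℝ) ≤ t := ht
    refine constant_of_has_deriv_right_zero (f := f) (a := 0) (b := t) ?_ ?_ t ⟨ht', le_rfl⟩
    · intro x hx
      exact ((hf x hx.1).continuousWithinAt).mono (fun y hy => hy.1)
    · intro x hx
      exact (hf x hx.1).mono (Set.Ici_subset_Ici.2 hx.1)
  have hU : ∀ t : ℝ, HasDerivAt (fun s => 1 + n₀ * s) n₀ t := by
    intro t
    simpa using ((hasDerivAt_id t).const_mul n₀).const_add 1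
  obtain ⟨A, hA⟩ : ∃ A : ℝ, A = (v₀ - n₀/3) / n₀^4 := ⟨_, rfl⟩
  obtain ⟨C, hC⟩ : ∃ C : ℝ, C = 6 * A^2 := ⟨_, rfl⟩
  obtain ⟨B, hB⟩ : ∃ B : ℝ, B = (w₀ - n₀/15 - A*n₀^4 - C*n₀^7) / n₀^6 := ⟨_, rfl⟩
  have hA4 : A * n₀^4 = v₀ - n₀/3 := by rw [hA]; field_simp
  -- Step 1: v formula
  set φ : ℝ → ℝ := fun s => (1+n₀*s)^4 * v s - n₀ * (1+n₀*s)^3 / 3 with hφdef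
  have hφ : ∀ t ∈ Set.Ici (0:ℝ), HasDerivWithinAt φ 0 (Set.Ici (0:ℝ)) t := by
    intro t ht
    have hu := hupos t ht
    have h1 : HasDerivWithinAt (fun s => (1+n₀*s)^4 * v s)
        (((4:ℕ):ℝ)*(1+n₀*t)^3*n₀ * v t + (1+n₀*t)^4 * (n t ^ 2 - 4 * n t * v t))
        (Set.Ici 0) t := (((hU t).pow 4).hasDerivWithinAt).mul (hv t ht)
    have h2 : HasDerivWithinAt (fun s => n₀ * (1+n₀*s)^3 / 3)
        (n₀ * (((3:ℕ):ℝ)*(1+n₀*t)^2*n₀) / 3) (Set.Ici 0) t :=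
      ((((hU t).pow 3).const_mul n₀).div_const 3).hasDerivWithinAt
    have h3 := h1.sub h2
    refine HasDerivWithinAt.congr_deriv h3 ?_
    rw [hn t]
    push_cast
    field_simp
    ring
  have hφt : ∀ t ∈ Set.Ici (0:ℝ), φ t = v₀ - n₀/3 := by
    intro t ht
    have h0 := hconst φ hφ t ht
    rw [h0, hφdef]
    norm_num [hv0]
  have hvf : ∀ t ∈ Set.Ici (0:ℝ),
      v t = n₀/(3*(1+n₀*t)) + A*n₀^4/(1+n₀*t)^4 := by
    intro t ht
    have hu := hupos t ht
    have hu' : (1+n₀*t) ≠ 0 := ne_of_gt hu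
    have h : (1+n₀*t)^4 * v t - n₀ * (1+n₀*t)^3 / 3 = v₀ - n₀/3 := hφt t ht
    field_simp
    linear_combination 3 * h - 3 * hA4
  -- Step 2: w formula
  set ψ : ℝ → ℝ := fun s => (1+n₀*s)^6 * w s - n₀*(1+n₀*s)^5/15
      - A*n₀^4*(1+n₀*s)^2 - C*n₀^7/(1+n₀*s) with hψdef
  have hψ : ∀ t ∈ Set.Ici (0:ℝ), HasDerivWithinAt ψ 0 (Set.Ici (0:ℝ)) t := by
    intro t ht
    have hu := hupos t ht
    have hu' : (1+n₀*t) ≠ 0 := ne_of_gt hu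
    have h1 : HasDerivWithinAt (fun s => (1+n₀*s)^6 * w s)
        (((6:ℕ):ℝ)*(1+n₀*t)^5*n₀ * w t
          + (1+n₀*t)^6 * (-(n t) ^ 2 + 6 * v t * (n t - v t) - 6 * n t * w t))
        (Set.Ici 0) t := (((hU t).pow 6).hasDerivWithinAt).mul (hw t ht)
    have h2 : HasDerivWithinAt (fun s => n₀*(1+n₀*s)^5/15)
        (n₀ * (((5:ℕ):ℝ)*(1+n₀*t)^4*n₀) / 15) (Set.Ici 0) t :=
      ((((hU t).pow 5).const_mul n₀).div_const 15).hasDerivWithinAt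
    have h3 : HasDerivWithinAt (fun s => A*n₀^4*(1+n₀*s)^2)
        ((A*n₀^4) * (((2:ℕ):ℝ)*(1+n₀*t)^1*n₀)) (Set.Ici 0) t :=
      (((hU t).pow 2).const_mul (A*n₀^4)).hasDerivWithinAt
    have h4 : HasDerivWithinAt (fun s => C*n₀^7/(1+n₀*s))
        ((0 * (1+n₀*t) - C*n₀^7 * n₀)/(1+n₀*t)^2) (Set.Ici 0) t :=
      ((hasDerivAt_const t (C*n₀^7)).div (hU t) hu').hasDerivWithinAt
    have h5 := ((h1.sub h2).sub h3).sub h4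
    refine HasDerivWithinAt.congr_deriv h5 ?_
    rw [hn t, hvf t ht, hC]
    push_cast
    field_simp
    ring
  have hψt : ∀ t ∈ Set.Ici (0:ℝ), ψ t = B * n₀^6 := by
    intro t ht
    have h0 := hconst ψ hψ t ht
    rw [h0, hψdef]
    norm_num [hw0]
    rw [hB]
    field_simp
  have hwf : ∀ t ∈ Set.Ici (0:ℝ),
      w t = n t / 15 + A * n t ^ 4 + B * n t ^ 6 + C * n t ^ 7 := by
    intro t ht
    have hu := hupos t ht
    have hu' : (1+n₀*t) ≠ 0 := ne_of_gt hu
    have h : (1+n₀*t)^6 * w t - n₀*(1+n₀*t)^5/15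
      - A*n₀^4*(1+n₀*t)^2 - C*n₀^7/(1+n₀*t) = B * n₀^6 := hψt t ht
    rw [hn t]
    field_simp at h ⊢
    linear_combination h
  refine ⟨⟨A, B, C, hwf⟩, ?_⟩
  -- limit part
  have hnlim : Tendsto n atTop (nhds 0) := by
    have h1 : Tendsto (fun t : ℝ => 1 + n₀ * t) atTop atTop :=
      tendsto_atTop_add_const_left _ 1 (tendsto_id.const_mul_atTop hn₀)
    have h2 : Tendsto (fun t : ℝ => n₀ / (1 + n₀ * t)) atTop (nhds 0) :=
      Tendsto.div_atTop tendsto_const_nhds h1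
    exact h2.congr (fun t => (hn t).symm)
  have heq : ∀ᶠ t in atTop, w t / n t
      = 1/15 + A * n t ^ 3 + B * n t ^ 5 + C * n t ^ 6 := by
    filter_upwards [eventually_ge_atTop (0:ℝ)] with t ht
    have hu := hupos t ht
    have hnne : n t ≠ 0 := by
      rw [hn t]; positivity
    rw [hwf t ht]
    field_simp
  have hlim : Tendsto (fun t => 1/15 + A * n t ^ 3 + B * n t ^ 5 + C * n t ^ 6)
      atTop (nhds (1/15)) := by
    have := ((tendsto_const_nhds (x := (1/15:ℝ)) (f := atTop)).add
      ((hnlim.pow 3).const_mul A)).add ((hnlim.pow 5).const_mul B) |>.add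
      ((hnlim.pow 6).const_mul C)
    simpa using this
  exact Tendsto.congr' (heq.mono fun x hx => hx.symm) hlim
end

section
/- If n₀ = 1, v₀ = 0, w₀ = 0, then the solution of ẇ + 6nw = −n² + 6v(n−v) with n = 1/(1+t), v = (n − n⁴)/3, is w = (n − 5n⁴ − 6n⁶ + 10n⁷)/15. -/
theorem stmt16 (n v w : ℝ → ℝ)
    (hn : ∀ t, n t = 1 / (1 + t))
    (hv : ∀ t, v t = (n t - n t ^ 4) / 3)
    (hw0 : w 0 = 0)
    (hw : ∀ t ∈ Set.Ici (0 : ℝ),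
      HasDerivWithinAt w (-(n t) ^ 2 + 6 * v t * (n t - v t) - 6 * n t * w t)
        (Set.Ici 0) t) :
    ∀ t ∈ Set.Ici (0 : ℝ),
      w t = (n t - 5 * n t ^ 4 - 6 * n t ^ 6 + 10 * n t ^ 7) / 15 := by
  set f : ℝ → ℝ := fun u =>
    w u * (1 + u) ^ 6 - ((1 + u) ^ 5 / 15 - (1 + u) ^ 2 / 3 + (2 / 3) * (1 + u)⁻¹ - 2 / 5)
    with hfdef
  have hderiv : ∀ x ∈ Set.Ici (0 : ℝ), HasDerivWithinAt f 0 (Set.Ici 0) x := by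
    intro x hx
    have hx0 : (0 : ℝ) ≤ x := hx
    have hpos : (0 : ℝ) < 1 + x := by linarith
    have hne : (1 + x) ≠ 0 := ne_of_gt hpos
    have hid : HasDerivAt (fun u : ℝ => 1 + u) 1 x := by
      simpa using (hasDerivAt_id x).const_add 1
    have hq : HasDerivAt (fun u : ℝ => (1 + u) ^ 6) ((6 : ℕ) * (1 + x) ^ 5 * 1) x :=
      hid.pow 6
    have h1 : HasDerivWithinAt (fun u => w u * (1 + u) ^ 6)
        ((-(n x) ^ 2 + 6 * v x * (n x - v x) - 6 * n x * w x) * (1 + x) ^ 6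
          + w x * ((6 : ℕ) * (1 + x) ^ 5 * 1)) (Set.Ici 0) x :=
      (hw x hx).mul hq.hasDerivWithinAt
    have h2 := ((((hid.pow 5).div_const 15).sub ((hid.pow 2).div_const 3)).add
        ((hid.inv hne).const_mul (2 / 3))).sub_const (2 / 5)
    have h3 := h1.sub h2.hasDerivWithinAt
    convert h3 using 1
    · rfl
    · rfl
    · rfl
    have hnx := hn x
    have hvx := hv x
    rw [hvx, hnx]
    field_simp
    ring
  intro t ht
  have hconst : f t = f 0 := by
    rcases eq_or_lt_of_le (show (0:ℝ) ≤ t from ht) with h | h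
    · rw [← h]
    · have hcont : ContinuousOn f (Set.Icc 0 t) := by
        intro x hx
        exact ((hderiv x hx.1).continuousWithinAt).mono
          (fun y hy => hy.1)
      have := constant_of_has_deriv_right_zero hcont
        (fun x hx => (hderiv x hx.1).mono (Set.Ici_subset_Ici.mpr hx.1))
      exact this t ⟨le_of_lt h, le_refl t⟩
  have hpos : (0 : ℝ) < 1 + t := by have : (0:ℝ) ≤ t := ht; linarith
  have hne : (1 + t) ≠ 0 := ne_of_gt hpos
  have hf0 : f 0 = 0 := by
    simp only [hfdef, hw0]
    norm_num
  rw [hf0] at hconst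
  have hwt : w t * (1 + t) ^ 6 =
      (1 + t) ^ 5 / 15 - (1 + t) ^ 2 / 3 + (2 / 3) * (1 + t)⁻¹ - 2 / 5 := by
    have := hconst
    simp only [hfdef] at this
    linarith
  have h6 : (1 + t) ^ 6 ≠ 0 := pow_ne_zero 6 hne
  have hwt2 : w t = ((1 + t) ^ 5 / 15 - (1 + t) ^ 2 / 3 + (2 / 3) * (1 + t)⁻¹ - 2 / 5)
      / (1 + t) ^ 6 := by rw [eq_div_iff h6]; exact hwt
  rw [hn t, hwt2]
  field_simp
  ring
end
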